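/- Let G=(V,E) be a graph and M the (3|E||V|+|E|)×|V| hole-free SNP matrix of the vertex-cover reduction. For 2 ≤ k < |V|-2, the minimum of D_{M,k} over k-tuples of haplotypes equals 3|E|(|V|-(k-1)) + |E| if and only if G has a vertex cover of size k-1. -/

import Mathlib

open Finset

/-- Hamming distance between binary strings indexed by `V`. -/
def hamming {V : Type*} [Fintype V] [DecidableEq V] (r H : V → Bool) : ℕ :=
  (univ.filter (fun j => r j ≠ H j)).card

/-- `D_{M,k}(H₁,...,H_k) = Σ over rows r of M of min_i d(r,H_i)` (Hamming distance). -/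
noncomputable def Dk {V : Type*} [Fintype V] [DecidableEq V] {k : ℕ}
    (M : Multiset (V → Bool)) (H : Fin k → V → Bool) : ℕ :=
  (M.map (fun r => sInf {t : ℕ | ∃ i : Fin k, hamming r (H i) = t})).sum

/-- The vertex-cover reduction matrix: `3|E|` copies of every row of the |V|×|V|
identity matrix, plus one row per edge with 1s at its two endpoints and 0s elsewhere. -/
def vcM {V : Type*} [Fintype V] [DecidableEq V]
    (G : SimpleGraph V) [DecidableRel G.Adj] : Multiset (V → Bool) :=
  (3 * G.edgeFinset.card) • (Finset.univ.val.map (fun i j => decide (j = i)))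
    + G.edgeFinset.val.map (fun e j => decide (j ∈ e))

set_option linter.unusedSectionVars false
set_option maxHeartbeats 1000000

section
variable {V : Type*} [Fintype V] [DecidableEq V] {k : ℕ}

def eRow (v : V) : V → Bool := fun j => decide (j = v)
def zRow : V → Bool := fun _ => false

noncomputable def gmin (H : Fin k → V → Bool) (r : V → Bool) : ℕ :=
  sInf {t : ℕ | ∃ i : Fin k, hamming r (H i) = t}

lemma hamming_eq_zero_iff {r h : V → Bool} : hamming r h = 0 ↔ r = h := by
  simp [hamming, Finset.card_eq_zero, Finset.filter_eq_empty_iff, funext_iff]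

lemma eRow_injective : Function.Injective (eRow (V := V)) := by
  intro v w h
  have := congrFun h v
  simpa [eRow] using this

lemma hamming_eRow_eRow {v w : V} (hvw : v ≠ w) : hamming (eRow v) (eRow w) = 2 := by
  have : (univ.filter (fun j => eRow v j ≠ eRow w j)) = {v, w} := by
    ext j
    by_cases h1 : j = v <;> by_cases h2 : j = w <;> simp_all [eRow]
  rw [hamming, this, Finset.card_pair hvw]

lemma hamming_eRow_zRow (v : V) : hamming (eRow v) zRow = 1 := by
  have : (univ.filter (fun j => eRow v j ≠ zRow j)) = {v} := by
    ext j
    by_cases h1 : j = v <;> simp_all [eRow, zRow]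
  rw [hamming, this, Finset.card_singleton]

lemma hamming_fRow_zRow {x y : V} (hxy : x ≠ y) :
    hamming (fun j => decide (j ∈ s(x,y))) zRow = 2 := by
  have : (univ.filter (fun j => (decide (j ∈ s(x,y)) : Bool) ≠ zRow j)) = {x, y} := by
    ext j
    by_cases h1 : j = x <;> by_cases h2 : j = y <;> simp_all [zRow, Sym2.mem_iff]
  rw [hamming, this, Finset.card_pair hxy]

lemma hamming_fRow_eRow_mem {x y w : V} (hxy : x ≠ y) (hw : w ∈ s(x,y)) :
    hamming (fun j => decide (j ∈ s(x,y))) (eRow w) = 1 := by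
  rw [Sym2.mem_iff] at hw
  rcases hw with rfl | rfl
  · have : (univ.filter (fun j => (decide (j ∈ s(w,y)) : Bool) ≠ eRow w j)) = {y} := by
      ext j
      by_cases h1 : j = w <;> by_cases h2 : j = y <;> simp_all [eRow, Sym2.mem_iff]
    rw [hamming, this, Finset.card_singleton]
  · have : (univ.filter (fun j => (decide (j ∈ s(x,w)) : Bool) ≠ eRow w j)) = {x} := by
      ext j
      by_cases h1 : j = x <;> by_cases h2 : j = w <;> simp_all [eRow, Sym2.mem_iff]
    rw [hamming, this, Finset.card_singleton]

lemma hamming_fRow_eRow_not_mem {x y w : V} (hxy : x ≠ y) (hw : w ∉ s(x,y)) :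
    hamming (fun j => decide (j ∈ s(x,y))) (eRow w) = 3 := by
  rw [Sym2.mem_iff] at hw
  push_neg at hw
  obtain ⟨hwx, hwy⟩ := hw
  have : (univ.filter (fun j => (decide (j ∈ s(x,y)) : Bool) ≠ eRow w j)) = {x, y, w} := by
    ext j
    by_cases h1 : j = x <;> by_cases h2 : j = y <;> by_cases h3 : j = w <;>
      simp_all [eRow, Sym2.mem_iff]
  rw [hamming, this]
  rw [Finset.card_insert_of_notMem (by simp [hxy, Ne.symm hwx]),
    Finset.card_pair (by exact fun h => hwy h.symm)]

lemma hamming_eRow_true {h : V → Bool} {v : V} (hv : h v = true) :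
    hamming (eRow v) h + 1 = (univ.filter (fun j => h j = true)).card := by
  have he : (univ.filter (fun j => eRow v j ≠ h j)) =
      (univ.filter (fun j => h j = true)).erase v := by
    ext j
    simp only [Finset.mem_filter, Finset.mem_erase, Finset.mem_univ, true_and]
    by_cases h1 : j = v <;> simp_all [eRow]
  rw [hamming, he, Finset.card_erase_of_mem (by simp [hv])]
  have : 0 < (univ.filter (fun j => h j = true)).card :=
    Finset.card_pos.2 ⟨v, by simp [hv]⟩
  omega

lemma hamming_eRow_false {h : V → Bool} {v : V} (hv : h v = false) :
    hamming (eRow v) h = (univ.filter (fun j => h j = true)).card + 1 := by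
  have he : (univ.filter (fun j => eRow v j ≠ h j)) =
      insert v (univ.filter (fun j => h j = true)) := by
    ext j
    simp only [Finset.mem_filter, Finset.mem_insert, Finset.mem_univ, true_and]
    by_cases h1 : j = v <;> simp_all [eRow]
  rw [hamming, he, Finset.card_insert_of_notMem (by simp [hv])]

lemma card_close_le_two {h : V → Bool} (h0 : h ≠ zRow) (h1 : ∀ w, h ≠ eRow w) :
    (univ.filter (fun v => hamming (eRow v) h ≤ 1)).card ≤ 2 := by
  set s := univ.filter (fun j => h j = true) with hs
  have hwt : 2 ≤ s.card := by
    rcases Nat.lt_or_ge s.card 2 with hlt | hge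
    · interval_cases hcard : s.card
      · exfalso; apply h0
        have := Finset.card_eq_zero.1 hcard
        funext j
        have : j ∉ s := by simp [this]
        simpa [hs, zRow] using this
      · exfalso
        obtain ⟨w, hw⟩ := Finset.card_eq_one.1 hcard
        apply h1 w
        funext j
        by_cases hj : j = w
        · subst hj
          have : j ∈ s := by rw [hw]; simp
          simpa [hs, eRow] using this
        · have : j ∉ s := by rw [hw]; simp [hj]
          simp only [hs, mem_filter, mem_univ, true_and] at this
          simp [eRow, hj, Bool.eq_false_iff.2, this]
    · exact hge
  have hsub : (univ.filter (fun v => hamming (eRow v) h ≤ 1)) ⊆ s := by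
    intro v hv
    simp only [mem_filter, mem_univ, true_and] at hv
    by_contra hvs
    have hfalse : h v = false := by
      simp only [hs, mem_filter, mem_univ, true_and] at hvs
      simpa using hvs
    rw [hamming_eRow_false hfalse, ← hs] at hv
    omega
  rcases (univ.filter (fun v => hamming (eRow v) h ≤ 1)).eq_empty_or_nonempty with he | ⟨v, hv⟩
  · simp [he]
  · have hvs := hsub hv
    simp only [mem_filter, mem_univ, true_and] at hv
    have htrue : h v = true := by simpa [hs] using hvs
    have := hamming_eRow_true (v := v) htrue
    rw [← hs] at this
    have hcard : s.card = 2 := by omega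
    calc _ ≤ s.card := Finset.card_le_card hsub
    _ = 2 := hcard

lemma gmin_exists (hk : 0 < k) (H : Fin k → V → Bool) (r : V → Bool) :
    ∃ i, gmin H r = hamming r (H i) := by
  have : gmin H r ∈ {t : ℕ | ∃ i : Fin k, hamming r (H i) = t} :=
    Nat.sInf_mem ⟨hamming r (H ⟨0, hk⟩), ⟨0, hk⟩, rfl⟩
  obtain ⟨i, hi⟩ := this
  exact ⟨i, hi.symm⟩

lemma gmin_le (H : Fin k → V → Bool) (r : V → Bool) (i : Fin k) :
    gmin H r ≤ hamming r (H i) := Nat.sInf_le ⟨i, rfl⟩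

lemma le_gmin (hk : 0 < k) (H : Fin k → V → Bool) (r : V → Bool) {c : ℕ}
    (h : ∀ i, c ≤ hamming r (H i)) : c ≤ gmin H r :=
  le_csInf ⟨hamming r (H ⟨0, hk⟩), ⟨0, hk⟩, rfl⟩ (fun _ ⟨i, hi⟩ => hi ▸ h i)

lemma multiset_sum_nsmul (n : ℕ) (s : Multiset ℕ) : (n • s).sum = n * s.sum := by
  induction n with
  | zero => simp
  | succ p ih => rw [succ_nsmul, Multiset.sum_add, ih]; ring

lemma Dk_decomp (G : SimpleGraph V) [DecidableRel G.Adj] (H : Fin k → V → Bool) :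
    Dk (vcM G) H = 3 * G.edgeFinset.card * (∑ v, gmin H (eRow v))
      + ∑ e ∈ G.edgeFinset, gmin H (fun j => decide (j ∈ e)) := by
  rw [Dk, vcM, Multiset.map_add, Multiset.sum_add]
  congr 1
  · rw [Multiset.map_nsmul, multiset_sum_nsmul, Multiset.map_map]
    rfl
  · rw [Multiset.map_map]
    rfl

lemma sum_card_le {α : Type*} [Fintype α] [DecidableEq α] (s : Finset α) (f : α → ℕ) (c : ℕ)
    (h : ∀ v ∈ s, c ≤ f v) : s.card * c ≤ ∑ v, f v :=
  le_trans (by simpa [mul_comm] using Finset.card_nsmul_le_sum s f c h)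
    (Finset.sum_le_sum_of_subset (Finset.subset_univ s))

lemma B_bound (G : SimpleGraph V) [DecidableRel G.Adj] (Z : Finset V)
    (H : Fin k → V → Bool) (hk0 : 0 < k)
    (hcand : ∀ i, H i = zRow ∨ ∃ v ∈ Z, H i = eRow v) :
    2 * G.edgeFinset.card ≤ (∑ e ∈ G.edgeFinset, gmin H (fun j => decide (j ∈ e)))
      + (G.edgeFinset.filter (fun e => ∃ u ∈ Z, u ∈ e)).card := by
  have hc : ∀ e ∈ G.edgeFinset, 1 ≤ gmin H (fun j => decide (j ∈ e)) ∧
      ((¬ ∃ u ∈ Z, u ∈ e) → 2 ≤ gmin H (fun j => decide (j ∈ e))) := by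
    intro e he
    induction e using Sym2.ind with
    | _ x y =>
      have hadj : G.Adj x y := by
        rw [SimpleGraph.mem_edgeFinset, SimpleGraph.mem_edgeSet] at he
        exact he
      have hxy : x ≠ y := hadj.ne
      constructor
      · refine le_gmin hk0 H _ (fun i => ?_)
        rcases hcand i with h | ⟨v, _, h⟩
        · rw [h, hamming_fRow_zRow hxy]; omega
        · rw [h]
          by_cases hv : v ∈ s(x,y)
          · rw [hamming_fRow_eRow_mem hxy hv]
          · rw [hamming_fRow_eRow_not_mem hxy hv]; omega
      · intro hunc
        refine le_gmin hk0 H _ (fun i => ?_)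
        rcases hcand i with h | ⟨v, hvZ, h⟩
        · rw [h, hamming_fRow_zRow hxy]
        · rw [h, hamming_fRow_eRow_not_mem hxy (fun hv => hunc ⟨v, hvZ, hv⟩)]
          omega
  have hsplit := Finset.sum_filter_add_sum_filter_not G.edgeFinset
    (fun e => ∃ u ∈ Z, u ∈ e) (fun e => gmin H (fun j => decide (j ∈ e)))
  have hcards := Finset.card_filter_add_card_filter_not (s := G.edgeFinset)
    (p := fun e => ∃ u ∈ Z, u ∈ e)
  have h1 : (G.edgeFinset.filter (fun e => ∃ u ∈ Z, u ∈ e)).card * 1 ≤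
      ∑ e ∈ G.edgeFinset.filter (fun e => ∃ u ∈ Z, u ∈ e),
        gmin H (fun j => decide (j ∈ e)) := by
    simpa [mul_comm] using Finset.card_nsmul_le_sum
      (G.edgeFinset.filter (fun e => ∃ u ∈ Z, u ∈ e)) _ 1
      (fun e hee => (hc e (Finset.mem_filter.1 hee).1).1)
  have h2 : (G.edgeFinset.filter (fun e => ¬ ∃ u ∈ Z, u ∈ e)).card * 2 ≤
      ∑ e ∈ G.edgeFinset.filter (fun e => ¬ ∃ u ∈ Z, u ∈ e),
        gmin H (fun j => decide (j ∈ e)) := by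
    simpa [mul_comm] using Finset.card_nsmul_le_sum
      (G.edgeFinset.filter (fun e => ¬ ∃ u ∈ Z, u ∈ e)) _ 2
      (fun e hee => (hc e (Finset.mem_filter.1 hee).1).2 (Finset.mem_filter.1 hee).2)
  omega

lemma sum_card_le' {α : Type*} [DecidableEq α] (s : Finset α) (f : α → ℕ) (c : ℕ)
    (h : ∀ v ∈ s, c ≤ f v) : s.card * c ≤ ∑ v ∈ s, f v := by
  simpa [mul_comm] using Finset.card_nsmul_le_sum s f c h

lemma arith1 (m t A B cov : ℕ) (hA : t + 1 ≤ A) :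
    3*m*t + 2*m - cov ≤ 3*m*A + B := by
  have h1 : 3*m*t + 2*m - cov ≤ 3*m*t + 3*m :=
    le_trans (Nat.sub_le _ _) (Nat.add_le_add_left (by omega) _)
  have h2 : 3*m*t + 3*m = 3*m*(t+1) := by ring
  have h3 : 3*m*(t+1) ≤ 3*m*A := Nat.mul_le_mul_left _ hA
  exact le_trans h1 (h2 ▸ le_trans h3 (Nat.le_add_right _ _))

lemma arith2 (m t A B cov : ℕ) (hA : t ≤ A) (hB : 2*m ≤ B + cov) :
    3*m*t + 2*m - cov ≤ 3*m*A + B := by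
  rw [Nat.sub_le_iff_le_add]
  have := add_le_add (Nat.mul_le_mul_left (3*m) hA) hB
  rw [add_assoc]
  exact this

lemma key (G : SimpleGraph V) [DecidableRel G.Adj] (hk2 : 2 ≤ k)
    (hk : k < Fintype.card V - 2) (H : Fin k → V → Bool) :
    ∃ U : Finset V, U.card = k - 1 ∧
      3 * G.edgeFinset.card * (Fintype.card V - (k-1)) + 2 * G.edgeFinset.card
        - (G.edgeFinset.filter (fun e => ∃ u ∈ U, u ∈ e)).card ≤ Dk (vcM G) H := by
  have hk0 : 0 < k := by omega
  have hn : k + 3 ≤ Fintype.card V := by omega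
  have hcardV : Fintype.card V = (univ : Finset V).card := (Finset.card_univ).symm
  set Z : Finset V := univ.filter (fun v => ∃ i, H i = eRow v) with hZdef
  have hmemZ : ∀ v, v ∈ Z ↔ ∃ i, H i = eRow v := by
    intro v; simp [hZdef]
  have hcardT : (univ.image H).card ≤ k := by
    refine le_trans Finset.card_image_le ?_
    simp
  have hZk : Z.card ≤ k := by
    have hinj : (Z.image eRow).card = Z.card :=
      Finset.card_image_of_injective _ eRow_injective
    have hsub : Z.image eRow ⊆ univ.image H := by
      intro x hx
      obtain ⟨v, hvZ, rfl⟩ := Finset.mem_image.1 hx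
      obtain ⟨i, hi⟩ := (hmemZ v).1 hvZ
      exact Finset.mem_image.2 ⟨i, Finset.mem_univ i, hi⟩
    have := Finset.card_le_card hsub
    omega
  have hcardZc : (univ \ Z).card = Fintype.card V - Z.card := by
    rw [Finset.card_sdiff_of_subset (Finset.subset_univ Z), hcardV]
  have L1 : ∀ v ∈ univ \ Z, 1 ≤ gmin H (eRow v) := by
    intro v hv
    obtain ⟨i, hi⟩ := gmin_exists hk0 H (eRow v)
    rcases Nat.eq_zero_or_pos (gmin H (eRow v)) with h0 | h1
    · exfalso
      rw [h0] at hi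
      have : H i = eRow v := (hamming_eq_zero_iff.1 hi.symm).symm
      have : v ∈ Z := (hmemZ v).2 ⟨i, this⟩
      simp [this] at hv
    · exact h1
  have hA1 : Fintype.card V - Z.card ≤ ∑ v, gmin H (eRow v) := by
    have h := sum_card_le (univ \ Z) (fun v => gmin H (eRow v)) 1 L1
    omega
  rcases Nat.lt_or_ge Z.card (k-1) with hZlt | hZge
  · -- Case I : Z.card ≤ k - 2
    obtain ⟨U, -, hU⟩ := Finset.exists_subset_card_eq (s := univ) (n := k-1)
      (by rw [← hcardV]; omega)
    refine ⟨U, hU, ?_⟩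
    rw [Dk_decomp]
    exact arith1 _ _ _ _ _ (by omega)
  · by_cases hZk' : Z.card = k
    · -- Case Z.card = k : all haplotypes are weight-1 rows of Z
      have hall : ∀ i, ∃ v ∈ Z, H i = eRow v := by
        have hinj : (Z.image eRow).card = Z.card :=
          Finset.card_image_of_injective _ eRow_injective
        have hsub : Z.image eRow ⊆ univ.image H := by
          intro x hx
          obtain ⟨v, hvZ, rfl⟩ := Finset.mem_image.1 hx
          obtain ⟨i, hi⟩ := (hmemZ v).1 hvZ
          exact Finset.mem_image.2 ⟨i, Finset.mem_univ i, hi⟩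
        have heq : Z.image eRow = univ.image H :=
          Finset.eq_of_subset_of_card_le hsub (by omega)
        intro i
        have hmem : H i ∈ univ.image H := Finset.mem_image_of_mem H (Finset.mem_univ i)
        rw [← heq] at hmem
        obtain ⟨v, hvZ, he⟩ := Finset.mem_image.1 hmem
        exact ⟨v, hvZ, he.symm⟩
      have L2 : ∀ v ∈ univ \ Z, 2 ≤ gmin H (eRow v) := by
        intro v hv
        obtain ⟨i, hi⟩ := gmin_exists hk0 H (eRow v)
        obtain ⟨w, hwZ, hw⟩ := hall i
        have hvw : v ≠ w := by
          rintro rfl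
          simp [hwZ] at hv
        rw [hi, hw, hamming_eRow_eRow hvw]
      obtain ⟨U, -, hU⟩ := Finset.exists_subset_card_eq (s := univ) (n := k-1)
        (by rw [← hcardV]; omega)
      refine ⟨U, hU, ?_⟩
      rw [Dk_decomp]
      have hA2 : (univ \ Z).card * 2 ≤ ∑ v, gmin H (eRow v) := by
        simpa using sum_card_le (univ \ Z) (fun v => gmin H (eRow v)) 2 L2
      exact arith1 _ _ _ _ _ (by omega)
    · -- Case Z.card = k - 1
      have hZk1 : Z.card = k - 1 := by omega
      by_cases hcand : ∀ i, H i = zRow ∨ ∃ v ∈ Z, H i = eRow v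
      · refine ⟨Z, hZk1, ?_⟩
        rw [Dk_decomp]
        exact arith2 _ _ _ _ _ (by omega) (B_bound G Z H hk0 hcand)
      · push_neg at hcand
        obtain ⟨i₀, hz0, hscover⟩ := hcand
        have hne : ∀ w, H i₀ ≠ eRow w := by
          intro w hw
          have hwZ : w ∈ Z := (hmemZ w).2 ⟨i₀, hw⟩
          exact hscover w hwZ hw
        have hall : ∀ i, H i = H i₀ ∨ ∃ v ∈ Z, H i = eRow v := by
          have hnotmem : H i₀ ∉ Z.image eRow := by
            intro hmem
            obtain ⟨v, -, hv⟩ := Finset.mem_image.1 hmem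
            exact hne v hv.symm
          have hsub : insert (H i₀) (Z.image eRow) ⊆ univ.image H := by
            intro x hx
            rcases Finset.mem_insert.1 hx with rfl | hx
            · exact Finset.mem_image_of_mem H (Finset.mem_univ i₀)
            · obtain ⟨v, hvZ, rfl⟩ := Finset.mem_image.1 hx
              obtain ⟨i, hi⟩ := (hmemZ v).1 hvZ
              exact Finset.mem_image.2 ⟨i, Finset.mem_univ i, hi⟩
          have hcard : (insert (H i₀) (Z.image eRow)).card = k := by
            rw [Finset.card_insert_of_notMem hnotmem,
              Finset.card_image_of_injective _ eRow_injective, hZk1]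
            omega
          have heq : insert (H i₀) (Z.image eRow) = univ.image H :=
            Finset.eq_of_subset_of_card_le hsub (by omega)
          intro i
          have hmem : H i ∈ univ.image H := Finset.mem_image_of_mem H (Finset.mem_univ i)
          rw [← heq] at hmem
          rcases Finset.mem_insert.1 hmem with h | h
          · exact Or.inl h
          · obtain ⟨v, hvZ, he⟩ := Finset.mem_image.1 h
            exact Or.inr ⟨v, hvZ, he.symm⟩
        set N : Finset V := univ.filter (fun v => hamming (eRow v) (H i₀) ≤ 1) with hNdef
        have hN : N.card ≤ 2 := card_close_le_two hz0 hne
        set s2 : Finset V := (univ \ Z) ∩ N with hs2def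
        set s1 : Finset V := (univ \ Z) \ N with hs1def
        have hs2N : s2.card ≤ 2 :=
          le_trans (Finset.card_le_card Finset.inter_subset_right) hN
        have hs1card : s1.card = (univ \ Z).card - s2.card := by
          rw [hs1def, hs2def, ← Finset.sdiff_inter_self_left,
            Finset.card_sdiff_of_subset Finset.inter_subset_left]
        have hL2 : ∀ v ∈ s1, 2 ≤ gmin H (eRow v) := by
          intro v hv
          rw [hs1def, Finset.mem_sdiff] at hv
          obtain ⟨hvZ, hvN⟩ := hv
          have hvZ' : v ∉ Z := (Finset.mem_sdiff.1 hvZ).2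
          have hham : 2 ≤ hamming (eRow v) (H i₀) := by
            by_contra hcon
            exact hvN (by rw [hNdef]; exact Finset.mem_filter.2 ⟨Finset.mem_univ v, by omega⟩)
          refine le_gmin hk0 H _ (fun i => ?_)
          rcases hall i with h | ⟨w, hwZ, h⟩
          · rw [h]; exact hham
          · rw [h, hamming_eRow_eRow (by rintro rfl; exact hvZ' hwZ)]
        have hdisj : Disjoint s1 s2 := by
          rw [hs1def, hs2def]
          exact Finset.disjoint_of_subset_right Finset.inter_subset_right
            Finset.sdiff_disjoint
        have hunion : ∑ v ∈ s1, gmin H (eRow v) + ∑ v ∈ s2, gmin H (eRow v)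
            = ∑ v ∈ s1 ∪ s2, gmin H (eRow v) := (Finset.sum_union hdisj).symm
        have hsub : ∑ v ∈ s1 ∪ s2, gmin H (eRow v) ≤ ∑ v, gmin H (eRow v) :=
          Finset.sum_le_sum_of_subset (Finset.subset_univ _)
        have he1 : s1.card * 2 ≤ ∑ v ∈ s1, gmin H (eRow v) := by
          simpa using sum_card_le' s1 (fun v => gmin H (eRow v)) 2 hL2
        have he2 : s2.card * 1 ≤ ∑ v ∈ s2, gmin H (eRow v) := by
          simpa using sum_card_le' s2 (fun v => gmin H (eRow v)) 1
            (fun v hv => L1 v (Finset.mem_of_mem_inter_left (hs2def ▸ hv)))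
        refine ⟨Z, hZk1, ?_⟩
        rw [Dk_decomp]
        exact arith1 _ _ _ _ _ (by omega)

lemma construction (G : SimpleGraph V) [DecidableRel G.Adj] (hk2 : 2 ≤ k)
    (U : Finset V) (hU : U.card = k - 1)
    (hVC : ∀ e ∈ G.edgeFinset, ∃ u ∈ U, u ∈ e) :
    ∃ H : Fin k → V → Bool,
      Dk (vcM G) H = 3 * G.edgeFinset.card * (Fintype.card V - (k - 1))
        + G.edgeFinset.card := by
  have hk0 : 0 < k := by omega
  set φ : Fin (k-1) → V := fun i => (U.equivFin.symm (Fin.cast hU.symm i) : V) with hφ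
  have hφU : ∀ i, φ i ∈ U := fun i => (U.equivFin.symm (Fin.cast hU.symm i)).2
  have hφsurj : ∀ u ∈ U, ∃ i, φ i = u := by
    intro u hu
    refine ⟨Fin.cast hU (U.equivFin ⟨u, hu⟩), ?_⟩
    simp [hφ]
  set H : Fin k → V → Bool :=
    fun i => if h : (i : ℕ) < k - 1 then eRow (φ ⟨i, h⟩) else zRow with hH
  have hrange : ∀ i : Fin k, H i = zRow ∨ ∃ u ∈ U, H i = eRow u := by
    intro i
    by_cases h : (i : ℕ) < k - 1
    · exact Or.inr ⟨φ ⟨i, h⟩, hφU _, by simp [hH, h]⟩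
    · exact Or.inl (by simp [hH, h])
  have hlast : H ⟨k-1, by omega⟩ = zRow := by simp [hH]
  have gv : ∀ v : V, gmin H (eRow v) = if v ∈ U then 0 else 1 := by
    intro v
    by_cases hv : v ∈ U
    · obtain ⟨i, hi⟩ := hφsurj v hv
      have := gmin_le H (eRow v) ⟨i, by omega⟩
      have heq : H ⟨(i : ℕ), by omega⟩ = eRow v := by
        simp only [hH]
        rw [dif_pos (by simpa using i.2)]
        congr 1
      rw [heq, (hamming_eq_zero_iff).2 rfl] at this
      simp [hv]; omega
    · simp only [hv, if_false]
      refine le_antisymm ?_ ?_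
      · have := gmin_le H (eRow v) ⟨k-1, by omega⟩
        rwa [hlast, hamming_eRow_zRow] at this
      · refine le_gmin hk0 H _ (fun i => ?_)
        rcases hrange i with h | ⟨u, hu, h⟩
        · rw [h, hamming_eRow_zRow]
        · rw [h, hamming_eRow_eRow (by rintro rfl; exact hv hu)]
          omega
  have ge : ∀ e ∈ G.edgeFinset, gmin H (fun j => decide (j ∈ e)) = 1 := by
    intro e he
    induction e using Sym2.ind with
    | _ x y =>
      have hadj : G.Adj x y := by
        rw [SimpleGraph.mem_edgeFinset, SimpleGraph.mem_edgeSet] at he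
        exact he
      have hxy : x ≠ y := hadj.ne
      refine le_antisymm ?_ ?_
      · obtain ⟨u, hu, hue⟩ := hVC s(x,y) he
        obtain ⟨i, hi⟩ := hφsurj u hu
        have heq : H ⟨(i : ℕ), by omega⟩ = eRow u := by
          simp only [hH]
          rw [dif_pos (by simpa using i.2)]
          congr 1
        have := gmin_le H (fun j => decide (j ∈ s(x,y))) ⟨i, by omega⟩
        rwa [heq, hamming_fRow_eRow_mem hxy hue] at this
      · refine le_gmin hk0 H _ (fun i => ?_)
        rcases hrange i with h | ⟨u, hu, h⟩
        · rw [h, hamming_fRow_zRow hxy]; omega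
        · rw [h]
          by_cases hue : u ∈ s(x,y)
          · rw [hamming_fRow_eRow_mem hxy hue]
          · rw [hamming_fRow_eRow_not_mem hxy hue]; omega
  refine ⟨H, ?_⟩
  rw [Dk_decomp]
  have h1 : ∑ v, gmin H (eRow v) = Fintype.card V - (k - 1) := by
    rw [Finset.sum_congr rfl (fun v _ => gv v), Finset.sum_ite, Finset.sum_const,
      Finset.sum_const]
    have : univ.filter (fun v => v ∉ U) = Uᶜ := by ext; simp
    rw [this, Finset.card_compl, hU]
    simp
  have h2 : ∑ e ∈ G.edgeFinset, gmin H (fun j => decide (j ∈ e)) = G.edgeFinset.card := by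
    rw [Finset.sum_congr rfl ge, Finset.sum_const, smul_eq_mul, mul_one]
  rw [h1, h2]

end

/-- Vertex-cover reduction: for `2 ≤ k < |V| - 2`, the minimum of `D_{M,k}` over
k-tuples of haplotypes equals `3|E|(|V|-(k-1)) + |E|` iff `G` has a vertex cover of
size `k-1`. -/
theorem Dk_vcM_min_iff_vertexCover {V : Type*} [Fintype V] [DecidableEq V]
    (G : SimpleGraph V) [DecidableRel G.Adj] (k : ℕ)
    (hk2 : 2 ≤ k) (hk : k < Fintype.card V - 2) :
    (sInf {v : ℕ | ∃ H : Fin k → V → Bool, Dk (vcM G) H = v}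
        = 3 * G.edgeFinset.card * (Fintype.card V - (k - 1)) + G.edgeFinset.card)
    ↔ ∃ U : Finset V, U.card = k - 1 ∧ ∀ e ∈ G.edgeFinset, ∃ u ∈ U, u ∈ e := by
  constructor
  · intro hs
    have hne : {v : ℕ | ∃ H : Fin k → V → Bool, Dk (vcM G) H = v}.Nonempty :=
      ⟨Dk (vcM G) (fun _ _ => false), fun _ _ => false, rfl⟩
    have hmem := Nat.sInf_mem hne
    rw [hs] at hmem
    obtain ⟨H, hH⟩ := hmem
    obtain ⟨U, hU, hle⟩ := key G hk2 hk H
    rw [hH] at hle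
    refine ⟨U, hU, ?_⟩
    have hcov_le := Finset.card_filter_le G.edgeFinset (fun e => ∃ u ∈ U, u ∈ e)
    have hm : G.edgeFinset.card ≤
        (G.edgeFinset.filter (fun e => ∃ u ∈ U, u ∈ e)).card := by
      generalize 3 * G.edgeFinset.card * (Fintype.card V - (k-1)) = P at hle
      omega
    have hcov : G.edgeFinset.filter (fun e => ∃ u ∈ U, u ∈ e) = G.edgeFinset :=
      Finset.eq_of_subset_of_card_le (Finset.filter_subset _ _) hm
    intro e he
    rw [← hcov] at he
    exact (Finset.mem_filter.1 he).2
  · rintro ⟨U, hU, hVC⟩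
    obtain ⟨H₀, hH₀⟩ := construction G hk2 U hU hVC
    apply le_antisymm
    · exact Nat.sInf_le ⟨H₀, hH₀⟩
    · refine le_csInf ⟨_, H₀, hH₀⟩ ?_
      rintro v ⟨H, rfl⟩
      obtain ⟨U', hU', hle⟩ := key G hk2 hk H
      have hcov_le := Finset.card_filter_le G.edgeFinset (fun e => ∃ u ∈ U', u ∈ e)
      refine le_trans ?_ hle
      generalize 3 * G.edgeFinset.card * (Fintype.card V - (k-1)) = P
      omega
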